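/- arXiv:1712.07915 — 6 statements merged into one kernel-verified Lean document; each statement's English description precedes it below -/
import Mathlib

section
/- For every real number η and every ε > 0, it holds that 0 ≤ |η| − η·tanh(η/ε) < 0.2785·ε, where tanh is the hyperbolic tangent function. -/
/-!
On the half-line `η ≥ 0` one has `η (1 - tanh (η/ε)) = ε · t / (eᵗ + 1)` with `t = 2η/ε`, and the
left-hand side is even in `η`. So the estimate is the bound `t / (eᵗ + 1) < 0.2785`, whose supremum
`W(1/e) ≈ 0.27846` is attained at `t = 1 + W(1/e)`; it is checked against the degree-8 Taylor
polynomial of `exp`.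
-/

open Real

theorem one_sub_tanh_eq (x : ℝ) : 1 - tanh x = 2 / (exp (2 * x) + 1) := by
  have h_exp_two_mul : exp (2 * x) = exp x * exp x := by rw [two_mul, exp_add]
  rw [tanh_eq, exp_neg, h_exp_two_mul]
  field_simp
  ring

theorem mul_tanh_div_eq_abs_mul_tanh (η ε : ℝ) : η * tanh (η / ε) = |η| * tanh (|η| / ε) := by
  rcases abs_choice η with h | h <;> rw [h]
  rw [neg_div, tanh_neg, neg_mul_neg]

theorem lt_mul_exp_add_one (t : ℝ) : t < 0.2785 * (exp t + 1) := by
  rcases lt_or_ge t 0 with ht | ht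
  · nlinarith [exp_pos t]
  have h_taylor := sum_le_exp_of_nonneg ht 8
  simp only [Finset.sum_range_succ, Finset.sum_range_zero, Nat.factorial] at h_taylor
  norm_num at h_taylor ⊢
  -- `63937/50000 ≈ 1 + W(1/e)` is the point where the bound is nearly tight.
  nlinarith [sq_nonneg (t - 63937/50000), mul_nonneg ht (sq_nonneg (t - 63937/50000)),
    mul_nonneg (pow_nonneg ht 2) (sq_nonneg (t - 63937/50000)),
    mul_nonneg (pow_nonneg ht 3) (sq_nonneg (t - 63937/50000))]

theorem tanh_scalar_estimate (η ε : ℝ) (hε : 0 < ε) :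
    0 ≤ |η| - η * Real.tanh (η / ε) ∧ |η| - η * Real.tanh (η / ε) < 0.2785 * ε := by
  set t := 2 * (|η| / ε) with ht_def
  have ht : 0 ≤ t := by positivity
  have h_eq : |η| - η * tanh (η / ε) = ε * t / (exp t + 1) := by
    rw [mul_tanh_div_eq_abs_mul_tanh, ← mul_one_sub, one_sub_tanh_eq, ht_def]
    field_simp
  rw [h_eq, div_lt_iff₀ (by positivity)]
  refine ⟨by positivity, ?_⟩
  calc ε * t < ε * (0.2785 * (exp t + 1)) := mul_lt_mul_of_pos_left (lt_mul_exp_add_one t) hε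
    _ = 0.2785 * ε * (exp t + 1) := by ring
end

section
/- Let N ≥ 2 and let D ∈ ℝ^{N×m} be a matrix each of whose columns sums to zero (such as the incidence matrix of an oriented connected undirected graph on N vertices with m edges), and let λ > 0 be a constant such that eᵀ(D Dᵀ)e ≥ λ‖e‖₂² for every e ∈ ℝ^N with Σᵢ eᵢ = 0 (for the incidence matrix of a connected graph, λ can be taken to be the second-smallest eigenvalue λ₂(L) of the Laplacian L = D Dᵀ). Let Π = I_N − (1/N)𝟏𝟏ᵀ. Let β₁, β₂ > 0 and ω₀ ≥ 0 satisfy β₁·√λ > ω₀. Let Ω : [0,∞) → ℝ^N be continuous with ‖Π Ω(t)‖₂ ≤ ω₀ for all t ≥ 0, and let x : [0,∞) → ℝ^N be continuously differentiable and satisfy ẋ(t) = −β₁ D tanh(β₂ Dᵀ x(t)) + Ω(t) for all t ≥ 0, where tanh acts componentwise. Then for every ρ > (0.2785·β₁·m/β₂)/(β₁·√λ − ω₀) there exists T ≥ 0 such that ‖Π x(t)‖₂ ≤ ρ for all t ≥ T; in particular |x_i(t) − x_j(t)| ≤ 2ρ for all indices i, j and all t ≥ T, i.e. the agents achieve practical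 consensus. -/
/-!
`V = ‖Π x‖²` is a Lyapunov function. As the columns of `D` sum to zero, `y := Dᵀ x = Dᵀ Π x`, so
the protocol contributes `-β₁ ∑ₖ yₖ tanh (β₂ yₖ) ≤ -β₁ (‖y‖₁ - 0.2785 m / β₂)` to `⟪Π x, ẋ⟫`,
and `‖y‖₁ ≥ ‖y‖₂ ≥ √λ ‖Π x‖`; the drift contributes at most `ω₀ ‖Π x‖`. Hence `V` decreases at a
uniform rate while `‖Π x‖ ≥ ρ`: it enters the ball `V ≤ ρ²` in finite time, and a fencing
argument keeps it there.
-/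

open Real Matrix

theorem one_sub_tanh (t : ℝ) : 1 - tanh t = 2 / (exp (2 * t) + 1) := by
  have h : exp (2 * t) = exp t / exp (-t) := by rw [← exp_sub]; ring_nf
  rw [tanh_eq, h]
  field_simp
  ring

/-- `z (1 - tanh z) = 2z / (e^{2z} + 1)` peaks just below `0.2785`; the tangent line of `exp` at
`log (1 / 0.2785)` certifies the bound. -/
theorem mul_one_sub_tanh_le (z : ℝ) : z * (1 - tanh z) ≤ 0.2785 := by
  have hlog : log (2000 / 557) ≤ 2557 / 2000 := by
    rw [log_le_iff_le_exp (by norm_num)]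
    refine le_trans ?_ (sum_le_exp_of_nonneg (by norm_num) 10)
    simp only [Finset.sum_range_succ, Finset.sum_range_zero, Nat.factorial]
    norm_num
  have htangent := add_one_le_exp (2 * z - log (2000 / 557))
  rw [exp_sub, exp_log (by norm_num)] at htangent
  rw [one_sub_tanh, mul_div_assoc', div_le_iff₀ (by positivity)]
  norm_num at htangent ⊢
  linarith

theorem abs_sub_le_mul_tanh_mul {b : ℝ} (hb : 0 < b) (z : ℝ) :
    |z| - 0.2785 / b ≤ z * tanh (b * z) := by
  wlog hz : 0 ≤ z generalizing z
  · simpa [mul_neg, tanh_neg] using this (-z) (by linarith)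
  have h : z * (1 - tanh (b * z)) ≤ 0.2785 / b := by
    rw [le_div_iff₀ hb]
    linarith [mul_one_sub_tanh_le (b * z)]
  rw [abs_of_nonneg hz]
  linarith

theorem le_of_hasDerivAt_neg_of_eq {V V' : ℝ → ℝ} {r t₀ : ℝ}
    (hV : ∀ t, t₀ ≤ t → HasDerivAt V (V' t) t) (hV' : ∀ t, t₀ ≤ t → V t = r → V' t < 0)
    (h₀ : V t₀ ≤ r) {t : ℝ} (ht : t₀ ≤ t) : V t ≤ r :=
  image_le_of_deriv_right_lt_deriv_boundary' (B := fun _ => r) (B' := 0)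
    (fun s hs => (hV s hs.1).continuousAt.continuousWithinAt)
    (fun s hs => (hV s hs.1).hasDerivWithinAt) h₀ continuousOn_const
    (fun _ _ => hasDerivWithinAt_const _ _ _) (fun s hs => hV' s hs.1) ⟨ht, le_rfl⟩

theorem exists_le_of_hasDerivAt_le_neg {V V' : ℝ → ℝ} {r δ : ℝ} (hδ : 0 < δ)
    (hV : ∀ t, 0 ≤ t → HasDerivAt V (V' t) t) (hV' : ∀ t, 0 ≤ t → r < V t → V' t ≤ -δ) :
    ∃ t, 0 ≤ t ∧ V t ≤ r := by
  by_contra! hgt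
  set T := max 0 ((V 0 - r) / δ)
  have hT : V 0 - r ≤ δ * T := by
    rw [← div_le_iff₀' hδ]
    exact le_max_right _ _
  have hdecay : V T ≤ V 0 - δ * T :=
    image_le_of_deriv_right_le_deriv_boundary (a := 0) (b := T) (B := fun t => V 0 - δ * t)
      (B' := fun _ => -δ) (fun s hs => (hV s hs.1).continuousAt.continuousWithinAt)
      (fun s hs => (hV s hs.1).hasDerivWithinAt) (by simp) (by fun_prop)
      (fun s _ => by
        simpa using ((hasDerivAt_id s).const_mul δ).const_sub (V 0) |>.hasDerivWithinAt)
      (fun s hs => hV' s hs.1 (hgt s hs.1)) ⟨le_max_left _ _, le_rfl⟩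
  linarith [hgt T (le_max_left _ _)]

theorem exists_forall_ge_le_of_hasDerivAt_le_neg {V V' : ℝ → ℝ} {r δ : ℝ} (hδ : 0 < δ)
    (hV : ∀ t, 0 ≤ t → HasDerivAt V (V' t) t) (hV' : ∀ t, 0 ≤ t → r ≤ V t → V' t ≤ -δ) :
    ∃ T, 0 ≤ T ∧ ∀ t, T ≤ t → V t ≤ r := by
  obtain ⟨T, hT, hVT⟩ := exists_le_of_hasDerivAt_le_neg hδ hV fun t ht h => hV' t ht h.le
  refine ⟨T, hT, fun t ht => le_of_hasDerivAt_neg_of_eq (fun s hs => hV s (hT.trans hs))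
    (fun s hs h => (hV' s (hT.trans hs) h.ge).trans_lt (neg_neg_of_pos hδ)) hVT ht⟩

section Consensus

variable {N m : ℕ}

/-- `centered v = Π v` with `Π = I - 𝟏𝟏ᵀ / N`. -/
noncomputable def centered (v : Fin N → ℝ) : Fin N → ℝ := fun i => v i - (∑ j, v j) / N

theorem sum_centered (v : Fin N → ℝ) : ∑ i, centered v i = 0 := by
  rcases N.eq_zero_or_pos with rfl | hN
  · simp
  · simp only [centered, Finset.sum_sub_distrib, Finset.sum_const, Finset.card_univ,
      Fintype.card_fin, nsmul_eq_mul]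
    rw [mul_div_cancel₀ _ (by positivity), sub_self]

theorem centered_dotProduct_centered (v w : Fin N → ℝ) :
    centered v ⬝ᵥ centered w = centered v ⬝ᵥ w := by
  conv_lhs => enter [2]; unfold centered
  simp only [dotProduct, mul_sub, Finset.sum_sub_distrib, ← Finset.sum_mul, sum_centered, zero_mul,
    sub_zero]

theorem transpose_mulVec_centered {D : Matrix (Fin N) (Fin m) ℝ} (hD : ∀ k, ∑ i, D i k = 0)
    (v : Fin N → ℝ) : Dᵀ *ᵥ centered v = Dᵀ *ᵥ v := by
  ext k
  simp [mulVec, dotProduct, centered, mul_sub, Finset.sum_sub_distrib, ← Finset.sum_mul, hD k]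

theorem dotProduct_mul_transpose_mulVec (D : Matrix (Fin N) (Fin m) ℝ) (v : Fin N → ℝ) :
    v ⬝ᵥ (D * Dᵀ) *ᵥ v = ∑ k, (Dᵀ *ᵥ v) k ^ 2 := by
  rw [← mulVec_mulVec, dotProduct_mulVec, ← mulVec_transpose]
  simp [dotProduct, sq]

theorem sqrt_sum_sq_le_sum_abs {ι : Type*} (s : Finset ι) (y : ι → ℝ) :
    √(∑ k ∈ s, y k ^ 2) ≤ ∑ k ∈ s, |y k| := by
  rw [sqrt_le_left (Finset.sum_nonneg fun _ _ => abs_nonneg _)]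
  simpa only [sq_abs] using
    Finset.sum_sq_le_sq_sum_of_nonneg (s := s) (f := fun k => |y k|) fun _ _ => abs_nonneg _

theorem abs_sub_le_two_mul_of_sqrt_sum_sq_centered_le {v : Fin N → ℝ} {ρ : ℝ}
    (hv : √(∑ i, centered v i ^ 2) ≤ ρ) (i j : Fin N) : |v i - v j| ≤ 2 * ρ := by
  have hcoord : ∀ i, |centered v i| ≤ ρ := fun i =>
    calc |centered v i| = √(centered v i ^ 2) := (sqrt_sq_eq_abs _).symm
      _ ≤ √(∑ i, centered v i ^ 2) :=
        sqrt_le_sqrt <|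
          Finset.single_le_sum (fun i _ => sq_nonneg (centered v i)) (Finset.mem_univ i)
      _ ≤ ρ := hv
  calc |v i - v j| = |centered v i - centered v j| := by simp [centered]
    _ ≤ |centered v i| + |centered v j| := abs_sub _ _
    _ ≤ 2 * ρ := by linarith [hcoord i, hcoord j]

noncomputable def tanhConsensus (β₁ β₂ : ℝ) (D : Matrix (Fin N) (Fin m) ℝ) (x : Fin N → ℝ) :
    Fin N → ℝ :=
  -β₁ • (D *ᵥ fun k => tanh (β₂ * (Dᵀ *ᵥ x) k))

theorem centered_dotProduct_le (v w : Fin N → ℝ) :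
    centered v ⬝ᵥ w ≤ √(∑ i, centered v i ^ 2) * √(∑ i, centered w i ^ 2) := by
  rw [← centered_dotProduct_centered]
  exact sum_mul_le_sqrt_mul_sqrt _ _ _

theorem centered_dotProduct_tanhConsensus_le {D : Matrix (Fin N) (Fin m) ℝ}
    (hD : ∀ k, ∑ i, D i k = 0) {lam : ℝ}
    (hspec : ∀ e : Fin N → ℝ, ∑ i, e i = 0 → lam * ∑ i, e i ^ 2 ≤ e ⬝ᵥ (D * Dᵀ) *ᵥ e)
    {β₁ β₂ : ℝ} (hβ₁ : 0 ≤ β₁) (hβ₂ : 0 < β₂) (x : Fin N → ℝ) :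
    centered x ⬝ᵥ tanhConsensus β₁ β₂ D x
      ≤ -(β₁ * √lam * √(∑ i, centered x i ^ 2)) + 0.2785 * β₁ * m / β₂ := by
  set y := Dᵀ *ᵥ x
  have hy : Dᵀ *ᵥ centered x = y := transpose_mulVec_centered hD x
  have hflow : centered x ⬝ᵥ tanhConsensus β₁ β₂ D x = -β₁ * ∑ k, y k * tanh (β₂ * y k) := by
    rw [tanhConsensus, dotProduct_smul, smul_eq_mul, dotProduct_mulVec, ← mulVec_transpose, hy]
    rfl
  have htanh : ∑ k, |y k| - m * (0.2785 / β₂) ≤ ∑ k, y k * tanh (β₂ * y k) := by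
    simpa [Finset.sum_sub_distrib] using
      Finset.sum_le_sum (s := Finset.univ) fun k _ => abs_sub_le_mul_tanh_mul hβ₂ (y k)
  have hcoercive : √lam * √(∑ i, centered x i ^ 2) ≤ ∑ k, |y k| :=
    calc √lam * √(∑ i, centered x i ^ 2) = √(lam * ∑ i, centered x i ^ 2) :=
          (sqrt_mul' _ (Finset.sum_nonneg fun _ _ => sq_nonneg _)).symm
      _ ≤ √(∑ k, y k ^ 2) := by
          refine sqrt_le_sqrt ?_
          simpa [dotProduct_mul_transpose_mulVec, hy] using hspec _ (sum_centered x)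
      _ ≤ ∑ k, |y k| := sqrt_sum_sq_le_sum_abs _ _
  rw [hflow]
  have := mul_le_mul_of_nonneg_left (sub_le_sub_right hcoercive _ |>.trans htanh) hβ₁
  linear_combination this

theorem hasDerivAt_sum_centered_sq {x : ℝ → Fin N → ℝ} {x' : Fin N → ℝ} {t : ℝ}
    (hx : ∀ i, HasDerivAt (fun s => x s i) (x' i) t) :
    HasDerivAt (fun s => ∑ i, centered (x s) i ^ 2) (2 * (centered (x t) ⬝ᵥ x')) t := by
  have hc : ∀ i, HasDerivAt (fun s => centered (x s) i) (centered x' i) t := fun i =>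
    (hx i).sub ((HasDerivAt.fun_sum fun j _ => hx j).div_const _)
  rw [← centered_dotProduct_centered, dotProduct, Finset.mul_sum]
  exact HasDerivAt.fun_sum fun i _ => by simpa [mul_assoc] using (hc i).fun_pow 2

end Consensus

theorem practical_consensus_single_integrator_general
    (N m : ℕ)
    (D : Matrix (Fin N) (Fin m) ℝ)
    (hDcol : ∀ k : Fin m, ∑ i, D i k = 0)
    (lam : ℝ)
    (hspec : ∀ e : Fin N → ℝ, (∑ i, e i) = 0 →
      lam * ∑ i, (e i) ^ 2 ≤ dotProduct e ((D * D.transpose).mulVec e))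
    (β₁ β₂ ω₀ : ℝ) (hβ₁ : 0 < β₁) (hβ₂ : 0 < β₂)
    (hgain : ω₀ < β₁ * Real.sqrt lam)
    (Ω : ℝ → Fin N → ℝ)
    (hΩbd : ∀ t : ℝ, 0 ≤ t →
      Real.sqrt (∑ i, (Ω t i - (∑ j, Ω t j) / N) ^ 2) ≤ ω₀)
    (x : ℝ → Fin N → ℝ)
    (hx : ∀ t : ℝ, 0 ≤ t → ∀ i : Fin N,
      HasDerivAt (fun s => x s i)
        (-β₁ * ∑ k, D i k * Real.tanh (β₂ * ∑ j, D j k * x t j) + Ω t i) t) :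
    ∀ ρ : ℝ, (0.2785 * β₁ * m / β₂) / (β₁ * Real.sqrt lam - ω₀) < ρ →
      ∃ T : ℝ, 0 ≤ T ∧ ∀ t : ℝ, T ≤ t →
        Real.sqrt (∑ i, (x t i - (∑ j, x t j) / N) ^ 2) ≤ ρ ∧
        ∀ i j : Fin N, |x t i - x t j| ≤ 2 * ρ := by
  intro ρ hρ
  have ha : 0 < β₁ * √lam - ω₀ := sub_pos.2 hgain
  have hρ0 : 0 ≤ ρ := (div_nonneg (by positivity) ha.le).trans hρ.le
  have hmargin : 0.2785 * β₁ * m / β₂ < (β₁ * √lam - ω₀) * ρ := (div_lt_iff₀' ha).1 hρ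
  set V := fun t => ∑ i, centered (x t) i ^ 2
  have hV : ∀ t, 0 ≤ t → HasDerivAt V
      (2 * (centered (x t) ⬝ᵥ (tanhConsensus β₁ β₂ D (x t) + Ω t))) t :=
    fun t ht => hasDerivAt_sum_centered_sq (hx t ht)
  have hV' : ∀ t, 0 ≤ t → ρ ^ 2 ≤ V t →
      2 * (centered (x t) ⬝ᵥ (tanhConsensus β₁ β₂ D (x t) + Ω t))
        ≤ -(2 * ((β₁ * √lam - ω₀) * ρ - 0.2785 * β₁ * m / β₂)) := by
    intro t ht hVt
    have hρV : ρ ≤ √(V t) := le_sqrt_of_sq_le hVt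
    have hflow := centered_dotProduct_tanhConsensus_le hDcol hspec hβ₁.le hβ₂ (x t)
    have hdrift := (centered_dotProduct_le (x t) (Ω t)).trans
      (mul_le_mul_of_nonneg_left (hΩbd t ht) (sqrt_nonneg _))
    rw [dotProduct_add]
    linarith [mul_le_mul_of_nonneg_left hρV ha.le]
  obtain ⟨T, hT0, hT⟩ := exists_forall_ge_le_of_hasDerivAt_le_neg (by linarith) hV hV'
  refine ⟨T, hT0, fun t ht => ?_⟩
  have hsqrt : √(V t) ≤ ρ := (sqrt_le_sqrt (hT t ht)).trans_eq (sqrt_sq hρ0)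
  exact ⟨hsqrt, abs_sub_le_two_mul_of_sqrt_sum_sq_centered_le hsqrt⟩

/-- Practical consensus for single-integrator agents under the tanh protocol
with a bounded projected drift. -/
theorem practical_consensus_single_integrator
    (N m : ℕ) (hN : 2 ≤ N)
    (D : Matrix (Fin N) (Fin m) ℝ)
    (hDcol : ∀ k : Fin m, ∑ i, D i k = 0)
    (lam : ℝ) (hlam : 0 < lam)
    (hspec : ∀ e : Fin N → ℝ, (∑ i, e i) = 0 →
      lam * ∑ i, (e i) ^ 2 ≤ dotProduct e ((D * D.transpose).mulVec e))
    (β₁ β₂ ω₀ : ℝ) (hβ₁ : 0 < β₁) (hβ₂ : 0 < β₂) (hω₀ : 0 ≤ ω₀)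
    (hgain : ω₀ < β₁ * Real.sqrt lam)
    (Ω : ℝ → Fin N → ℝ)
    (hΩcont : ContinuousOn Ω (Set.Ici 0))
    (hΩbd : ∀ t : ℝ, 0 ≤ t →
      Real.sqrt (∑ i, (Ω t i - (∑ j, Ω t j) / N) ^ 2) ≤ ω₀)
    (x : ℝ → Fin N → ℝ)
    (hx : ∀ t : ℝ, 0 ≤ t → ∀ i : Fin N,
      HasDerivAt (fun s => x s i)
        (-β₁ * ∑ k, D i k * Real.tanh (β₂ * ∑ j, D j k * x t j) + Ω t i) t) :
    ∀ ρ : ℝ, (0.2785 * β₁ * m / β₂) / (β₁ * Real.sqrt lam - ω₀) < ρ →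
      ∃ T : ℝ, 0 ≤ T ∧ ∀ t : ℝ, T ≤ t →
        Real.sqrt (∑ i, (x t i - (∑ j, x t j) / N) ^ 2) ≤ ρ ∧
        ∀ i j : Fin N, |x t i - x t j| ≤ 2 * ρ :=
  practical_consensus_single_integrator_general N m D hDcol lam hspec β₁ β₂ ω₀ hβ₁ hβ₂ hgain Ω hΩbd
    x hx
end

section
/- Let N ≥ 1 and for i = 1,…,N let L_i : ℝ × [0,∞) → ℝ be twice continuously differentiable with ∂²L_i/∂x²(x,t) ≠ 0 for all (x,t). Let r_i : [0,∞) → ℝ be continuous with Σ_{i=1}^{N} r_i(t) = 0 for all t ≥ 0, and let x_i : [0,∞) → ℝ be continuously differentiable and satisfy ẋ_i(t) = −(∂²L_i/∂x²(x_i(t),t))^{-1}·(∂L_i/∂x(x_i(t),t) + ∂²L_i/∂t∂x(x_i(t),t)) + r_i(t) for all t. Assume the Hessians agree along the trajectories, i.e. ∂²L_i/∂x²(x_i(t),t) = ∂²L_j/∂x²(x_j(t),t) for all i, j and all t ≥ 0. Then the aggregate gradient S(t) := Σ_{i=1}^{N} ∂L_i/∂x(x_i(t),t) satisfies S′(t)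 = −S(t) for all t ≥ 0; consequently S(t) = S(0)·e^{−t} for all t and S(t) → 0 as t → ∞. -/
/-! Along each trajectory the control law is a Newton step on `∂L_i/∂x` plus the consensus term,
so the chain rule gives `d/dt ∂L_i/∂x (x_i t, t) = -∂L_i/∂x (x_i t, t) + ∂²L_i/∂x² · r_i t`.
Summing over the agents, the common Hessian factors out of `∑ r_i = 0`, leaving `S' = -S`;
then `S t · eᵗ` has zero derivative, hence `S t = S 0 · e⁻ᵗ → 0`. -/

open Filter Finset

theorem HasFDerivAt.hasDerivAt_comp_graph {f : ℝ → ℝ → ℝ} {γ : ℝ → ℝ} {fx ft γ' t : ℝ}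
    (hf : HasFDerivAt (fun p : ℝ × ℝ => f p.1 p.2)
      (fx • ContinuousLinearMap.fst ℝ ℝ ℝ + ft • ContinuousLinearMap.snd ℝ ℝ ℝ) (γ t, t))
    (hγ : HasDerivAt γ γ' t) :
    HasDerivAt (fun s => f (γ s) s) (fx * γ' + ft) t :=
  (hf.comp_hasDerivAt_of_eq t (hγ.prodMk (hasDerivAt_id t)) rfl).congr_deriv (by simp)

theorem hasDerivAt_comp_graph_of_newton_flow {f : ℝ → ℝ → ℝ} {γ : ℝ → ℝ} {fx fxx fxt r t : ℝ}
    (hf : HasFDerivAt (fun p : ℝ × ℝ => f p.1 p.2)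
      (fxx • ContinuousLinearMap.fst ℝ ℝ ℝ + fxt • ContinuousLinearMap.snd ℝ ℝ ℝ) (γ t, t))
    (hfxx : fxx ≠ 0) (hγ : HasDerivAt γ (-fxx⁻¹ * (fx + fxt) + r) t) :
    HasDerivAt (fun s => f (γ s) s) (-fx + fxx * r) t := by
  convert hf.hasDerivAt_comp_graph hγ using 1
  field_simp
  ring

theorem Finset.sum_mul_eq_zero_of_forall_eq {ι : Type*} (s : Finset ι) {h r : ι → ℝ}
    (hh : ∀ i ∈ s, ∀ j ∈ s, h i = h j) (hr : ∑ i ∈ s, r i = 0) :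
    ∑ i ∈ s, h i * r i = 0 := by
  rcases s.eq_empty_or_nonempty with rfl | ⟨i₀, hi₀⟩
  · exact sum_empty
  · rw [sum_congr rfl fun i hi => by rw [hh i hi i₀ hi₀], ← mul_sum, hr, mul_zero]

theorem eq_mul_exp_of_hasDerivAt_mul_self {S : ℝ → ℝ} {k : ℝ}
    (hS : ∀ t, 0 ≤ t → HasDerivAt S (k * S t) t) {t : ℝ} (ht : 0 ≤ t) :
    S t = S 0 * Real.exp (k * t) := by
  have hderiv : ∀ s, 0 ≤ s → HasDerivAt (fun s => S s * Real.exp (-(k * s))) 0 s := by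
    intro s hs
    have hexp : HasDerivAt (fun s => Real.exp (-(k * s))) (Real.exp (-(k * s)) * -k) s :=
      (((hasDerivAt_id s).const_mul k).neg).exp.congr_deriv (by simp)
    exact ((hS s hs).fun_mul hexp).congr_deriv (by ring)
  have hconst := constant_of_has_deriv_right_zero
    (fun s hs => (hderiv s hs.1).continuousAt.continuousWithinAt)
    (fun s hs => (hderiv s hs.1).hasDerivWithinAt) t (Set.right_mem_Icc.mpr ht)
  simp only [mul_zero, neg_zero, Real.exp_zero, mul_one] at hconst
  rw [← hconst, mul_assoc, ← Real.exp_add, neg_add_cancel, Real.exp_zero, mul_one]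

theorem aggregate_gradient_decay_single_integrator_general
    (N : ℕ)
    (Lx Lxx Lxt : Fin N → ℝ → ℝ → ℝ)
    (hLx : ∀ i : Fin N, ∀ x t : ℝ,
      HasFDerivAt (fun p : ℝ × ℝ => Lx i p.1 p.2)
        (Lxx i x t • ContinuousLinearMap.fst ℝ ℝ ℝ +
          Lxt i x t • ContinuousLinearMap.snd ℝ ℝ ℝ) (x, t))
    (hHess : ∀ i : Fin N, ∀ x t : ℝ, Lxx i x t ≠ 0)
    (r : Fin N → ℝ → ℝ)
    (hrsum : ∀ t : ℝ, 0 ≤ t → ∑ i, r i t = 0)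
    (x : Fin N → ℝ → ℝ)
    (hx : ∀ i : Fin N, ∀ t : ℝ, 0 ≤ t →
      HasDerivAt (x i)
        (-(Lxx i (x i t) t)⁻¹ * (Lx i (x i t) t + Lxt i (x i t) t) + r i t) t)
    (hHessEq : ∀ i j : Fin N, ∀ t : ℝ, 0 ≤ t →
      Lxx i (x i t) t = Lxx j (x j t) t)
    (S : ℝ → ℝ) (hS : S = fun t => ∑ i, Lx i (x i t) t) :
    (∀ t : ℝ, 0 ≤ t → HasDerivAt S (-S t) t) ∧
    (∀ t : ℝ, 0 ≤ t → S t = S 0 * Real.exp (-t)) ∧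
    Filter.Tendsto S Filter.atTop (nhds 0) := by
  subst hS
  have hdecay : ∀ t : ℝ, 0 ≤ t → HasDerivAt (fun t => ∑ i, Lx i (x i t) t)
      (-∑ i, Lx i (x i t) t) t := by
    intro t ht
    have hsum := HasDerivAt.fun_sum fun i (_ : i ∈ univ) =>
      hasDerivAt_comp_graph_of_newton_flow (hLx i (x i t) t) (hHess i (x i t) t) (hx i t ht)
    have hcons : ∑ i, Lxx i (x i t) t * r i t = 0 :=
      univ.sum_mul_eq_zero_of_forall_eq (fun i _ j _ => hHessEq i j t ht) (hrsum t ht)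
    rwa [sum_add_distrib, hcons, add_zero, sum_neg_distrib] at hsum
  have hsol : ∀ t : ℝ, 0 ≤ t → ∑ i, Lx i (x i t) t = (∑ i, Lx i (x i 0) 0) * Real.exp (-t) := by
    intro t ht
    simpa using eq_mul_exp_of_hasDerivAt_mul_self (k := -1) (by simpa using hdecay) ht
  refine ⟨hdecay, hsol, ?_⟩
  have hlim := Real.tendsto_exp_neg_atTop_nhds_zero.const_mul (∑ i, Lx i (x i 0) 0)
  rw [mul_zero] at hlim
  refine hlim.congr' ?_
  filter_upwards [eventually_ge_atTop 0] with t ht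
  exact (hsol t ht).symm

/-- Aggregate-gradient decay for single-integrator networks under the
interior-point based control law (core of Theorem 1). Here `Lx i`, `Lxx i`,
`Lxt i` denote ∂L_i/∂x, ∂²L_i/∂x² and ∂²L_i/∂t∂x respectively, the second
order data being encoded by the (continuous) total derivative of `Lx i`. -/
theorem aggregate_gradient_decay_single_integrator
    (N : ℕ) (hN : 1 ≤ N)
    (L Lx Lxx Lxt : Fin N → ℝ → ℝ → ℝ)
    (hL : ∀ i : Fin N, ∀ x t : ℝ, HasDerivAt (fun y => L i y t) (Lx i x t) x)
    (hLx : ∀ i : Fin N, ∀ x t : ℝ,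
      HasFDerivAt (fun p : ℝ × ℝ => Lx i p.1 p.2)
        (Lxx i x t • ContinuousLinearMap.fst ℝ ℝ ℝ +
          Lxt i x t • ContinuousLinearMap.snd ℝ ℝ ℝ) (x, t))
    (hLxxCont : ∀ i : Fin N, Continuous (fun p : ℝ × ℝ => Lxx i p.1 p.2))
    (hLxtCont : ∀ i : Fin N, Continuous (fun p : ℝ × ℝ => Lxt i p.1 p.2))
    (hHess : ∀ i : Fin N, ∀ x t : ℝ, Lxx i x t ≠ 0)
    (r : Fin N → ℝ → ℝ)
    (hrcont : ∀ i : Fin N, Continuous (r i))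
    (hrsum : ∀ t : ℝ, 0 ≤ t → ∑ i, r i t = 0)
    (x : Fin N → ℝ → ℝ)
    (hx : ∀ i : Fin N, ∀ t : ℝ, 0 ≤ t →
      HasDerivAt (x i)
        (-(Lxx i (x i t) t)⁻¹ * (Lx i (x i t) t + Lxt i (x i t) t) + r i t) t)
    (hHessEq : ∀ i j : Fin N, ∀ t : ℝ, 0 ≤ t →
      Lxx i (x i t) t = Lxx j (x j t) t)
    (S : ℝ → ℝ) (hS : S = fun t => ∑ i, Lx i (x i t) t) :
    (∀ t : ℝ, 0 ≤ t → HasDerivAt S (-S t) t) ∧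
    (∀ t : ℝ, 0 ≤ t → S t = S 0 * Real.exp (-t)) ∧
    Filter.Tendsto S Filter.atTop (nhds 0) :=
  aggregate_gradient_decay_single_integrator_general N Lx Lxx Lxt hLx hHess r hrsum x hx hHessEq S
    hS
end

section
/- Let Q : ℝ × [0,∞) → ℝ be three times continuously differentiable with ∂²Q/∂x²(x,t) ≠ 0 for all (x,t), and define k(x,t) = (∂²Q/∂x²(x,t))^{-1}·(∂Q/∂x(x,t) + ∂²Q/∂t∂x(x,t)). Let x, v : [0,∞) → ℝ be continuously differentiable with ẋ(t) = v(t) and v̇(t) = −(d/dt)[k(x(t),t)] − ∂²Q/∂x²(x(t),t)·∂Q/∂x(x(t),t) for all t ≥ 0. Set G(t) := ∂Q/∂x(x(t),t) and P(t) := v(t) + k(x(t),t). Then for all t ≥ 0: G′(t) = ∂²Q/∂x²(x(t),t)·P(t) − G(t), P′(t) = −∂²Q/∂x²(x(t),t)·G(t), and (d/dt)[½·G(t)² + ½·P(t)²] = −G(t)². Consequently t ↦ G(t)² + P(t)² is nonincreasing and ∫₀^∞ G(t)² dt ≤ ½·(G(0)² + P(0)²). -/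
open MeasureTheory Set Filter Topology

/-! The feedforward term `k` is chosen so that, along the closed loop, `(G, P)` moves by a
rotation at rate `∂²Q/∂x²` plus the damping `-G` of its first coordinate. The rotation leaves
`½ G² + ½ P²` invariant, so this Lyapunov function decreases at rate `G²`; being nonnegative, it
bounds `∫₀^∞ G²` by its initial value. -/

theorem hasDerivAt_comp_prodMk_id {f : ℝ → ℝ → ℝ} {x : ℝ → ℝ} {a b w t : ℝ}
    (hf : HasFDerivAt (fun p : ℝ × ℝ => f p.1 p.2)
      (a • ContinuousLinearMap.fst ℝ ℝ ℝ + b • ContinuousLinearMap.snd ℝ ℝ ℝ)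
      (x t, t))
    (hx : HasDerivAt x w t) :
    HasDerivAt (fun s => f (x s) s) (a * w + b) t := by
  have hcurve : HasDerivAt (fun s => (x s, s)) (w, 1) t := hx.prodMk (hasDerivAt_id t)
  refine (hf.comp_hasDerivAt (f := fun s => (x s, s)) t hcurve).congr_deriv ?_
  simp

theorem hasDerivAt_half_sq_add_half_sq {G P : ℝ → ℝ} {c t : ℝ}
    (hG : HasDerivAt G (c * P t - G t) t) (hP : HasDerivAt P (-(c * G t)) t) :
    HasDerivAt (fun s => (1 / 2) * (G s) ^ 2 + (1 / 2) * (P s) ^ 2) (-(G t) ^ 2) t := by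
  refine (((hG.pow 2).const_mul (1 / 2)).add ((hP.pow 2).const_mul (1 / 2))).congr_deriv ?_
  ring

theorem antitoneOn_Ici_of_hasDerivAt_nonpos {f f' : ℝ → ℝ} {a : ℝ}
    (hf : ∀ t ∈ Ici a, HasDerivAt f (f' t) t) (hf' : ∀ t ∈ Ioi a, f' t ≤ 0) :
    AntitoneOn f (Ici a) := by
  refine antitoneOn_of_deriv_nonpos (convex_Ici a)
    (fun t ht => (hf t ht).continuousAt.continuousWithinAt) ?_ ?_ <;> rw [interior_Ici]
  · exact fun t ht => (hf t (mem_Ici_of_Ioi ht)).differentiableAt.differentiableWithinAt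
  · exact fun t ht => (hf t (mem_Ici_of_Ioi ht)).deriv ▸ hf' t ht

theorem AntitoneOn.exists_tendsto_atTop {α β : Type*} [LinearOrder α]
    [ConditionallyCompleteLinearOrder β] [TopologicalSpace β] [OrderTopology β]
    {f : α → β} {a : α} (hf : AntitoneOn f (Ici a)) (hbdd : BddBelow (f '' Ici a)) :
    ∃ l, Tendsto f atTop (𝓝 l) := by
  -- `f` is eventually equal to the globally antitone `t ↦ f (max t a)`.
  have hanti : Antitone fun t => f (max t a) := fun s t hst =>
    hf (le_max_right s a) (le_max_right t a) (max_le_max hst le_rfl)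
  have hbdd' : BddBelow (range fun t => f (max t a)) :=
    hbdd.mono (range_subset_iff.2 fun t => mem_image_of_mem f (le_max_right t a))
  refine ⟨_, (tendsto_atTop_ciInf hanti hbdd').congr' ?_⟩
  filter_upwards [eventually_ge_atTop a] with t ht
  rw [max_eq_left ht]

theorem integral_Ioi_le_of_hasDerivAt_neg {V f : ℝ → ℝ} {a : ℝ}
    (hV : ∀ t ∈ Ici a, HasDerivAt V (-f t) t) (hf : ∀ t ∈ Ioi a, 0 ≤ f t)
    (hV_nonneg : ∀ t ∈ Ici a, 0 ≤ V t) :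
    ∫ t in Ioi a, f t ≤ V a := by
  have hf' : ∀ t ∈ Ioi a, -f t ≤ 0 := fun t ht => neg_nonpos.2 (hf t ht)
  obtain ⟨l, hl⟩ := (antitoneOn_Ici_of_hasDerivAt_nonpos hV hf').exists_tendsto_atTop
    ⟨0, forall_mem_image.2 hV_nonneg⟩
  have hl_nonneg : 0 ≤ l :=
    ge_of_tendsto hl ((eventually_ge_atTop a).mono fun t ht => hV_nonneg t ht)
  have hFTC := integral_Ioi_of_hasDerivAt_of_nonpos' hV hf' hl
  rw [integral_neg] at hFTC
  linarith

theorem centralized_double_integrator_lyapunov_general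
    (Qx Qxx Qxt : ℝ → ℝ → ℝ)
    (hQx : ∀ x t : ℝ,
      HasFDerivAt (fun p : ℝ × ℝ => Qx p.1 p.2)
        (Qxx x t • ContinuousLinearMap.fst ℝ ℝ ℝ +
          Qxt x t • ContinuousLinearMap.snd ℝ ℝ ℝ) (x, t))
    (hHess : ∀ x t : ℝ, Qxx x t ≠ 0)
    (k : ℝ → ℝ → ℝ)
    (hk : k = fun x t => (Qxx x t)⁻¹ * (Qx x t + Qxt x t))
    (x v : ℝ → ℝ)
    (kd : ℝ → ℝ)
    (hkd : ∀ t : ℝ, 0 ≤ t → HasDerivAt (fun s => k (x s) s) (kd t) t)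
    (hxv : ∀ t : ℝ, 0 ≤ t → HasDerivAt x (v t) t)
    (hv : ∀ t : ℝ, 0 ≤ t →
      HasDerivAt v (-kd t - Qxx (x t) t * Qx (x t) t) t)
    (G P : ℝ → ℝ)
    (hG : G = fun t => Qx (x t) t)
    (hP : P = fun t => v t + k (x t) t) :
    (∀ t : ℝ, 0 ≤ t → HasDerivAt G (Qxx (x t) t * P t - G t) t) ∧
    (∀ t : ℝ, 0 ≤ t → HasDerivAt P (-(Qxx (x t) t * G t)) t) ∧
    (∀ t : ℝ, 0 ≤ t →
      HasDerivAt (fun s => (1 / 2) * (G s) ^ 2 + (1 / 2) * (P s) ^ 2)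
        (-(G t) ^ 2) t) ∧
    AntitoneOn (fun t => (G t) ^ 2 + (P t) ^ 2) (Set.Ici (0 : ℝ)) ∧
    (∫ t in Set.Ioi (0 : ℝ), (G t) ^ 2) ≤ (1 / 2) * ((G 0) ^ 2 + (P 0) ^ 2) := by
  have hGd (t : ℝ) (ht : 0 ≤ t) : HasDerivAt G (Qxx (x t) t * P t - G t) t := by
    subst hG hP hk
    refine (hasDerivAt_comp_prodMk_id (hQx (x t) t) (hxv t ht)).congr_deriv ?_
    field_simp [hHess (x t) t]
    ring
  have hPd (t : ℝ) (ht : 0 ≤ t) : HasDerivAt P (-(Qxx (x t) t * G t)) t := by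
    subst hG hP
    refine ((hv t ht).add (hkd t ht)).congr_deriv ?_
    ring
  have hVd (t : ℝ) (ht : 0 ≤ t) := hasDerivAt_half_sq_add_half_sq (hGd t ht) (hPd t ht)
  have hV_anti := antitoneOn_Ici_of_hasDerivAt_nonpos hVd fun t _ => neg_nonpos.2 (sq_nonneg (G t))
  refine ⟨hGd, hPd, hVd, fun s hs t ht hst => ?_, ?_⟩
  · have := hV_anti hs ht hst
    dsimp only at this ⊢
    linarith
  · calc ∫ t in Ioi (0 : ℝ), (G t) ^ 2
        ≤ (1 / 2) * (G 0) ^ 2 + (1 / 2) * (P 0) ^ 2 :=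
          integral_Ioi_le_of_hasDerivAt_neg hVd (fun t _ => sq_nonneg (G t))
            fun t _ => by positivity
      _ = (1 / 2) * ((G 0) ^ 2 + (P 0) ^ 2) := by ring

/-- Lyapunov analysis of the centralized double-integrator control law for a
smooth time-varying objective Q. Here `Qx`, `Qxx`, `Qxt` denote ∂Q/∂x, ∂²Q/∂x²
and ∂²Q/∂t∂x, `k` is the feedforward term, and `kd t` is the total time
derivative of t ↦ k(x(t),t) (which exists since Q is C³). -/
theorem centralized_double_integrator_lyapunov
    (Q Qx Qxx Qxt : ℝ → ℝ → ℝ)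
    (hQ : ∀ x t : ℝ, HasDerivAt (fun y => Q y t) (Qx x t) x)
    (hQx : ∀ x t : ℝ,
      HasFDerivAt (fun p : ℝ × ℝ => Qx p.1 p.2)
        (Qxx x t • ContinuousLinearMap.fst ℝ ℝ ℝ +
          Qxt x t • ContinuousLinearMap.snd ℝ ℝ ℝ) (x, t))
    (hHess : ∀ x t : ℝ, Qxx x t ≠ 0)
    (k : ℝ → ℝ → ℝ)
    (hk : k = fun x t => (Qxx x t)⁻¹ * (Qx x t + Qxt x t))
    (x v : ℝ → ℝ)
    (kd : ℝ → ℝ)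
    (hkd : ∀ t : ℝ, 0 ≤ t → HasDerivAt (fun s => k (x s) s) (kd t) t)
    (hxv : ∀ t : ℝ, 0 ≤ t → HasDerivAt x (v t) t)
    (hv : ∀ t : ℝ, 0 ≤ t →
      HasDerivAt v (-kd t - Qxx (x t) t * Qx (x t) t) t)
    (G P : ℝ → ℝ)
    (hG : G = fun t => Qx (x t) t)
    (hP : P = fun t => v t + k (x t) t) :
    (∀ t : ℝ, 0 ≤ t → HasDerivAt G (Qxx (x t) t * P t - G t) t) ∧
    (∀ t : ℝ, 0 ≤ t → HasDerivAt P (-(Qxx (x t) t * G t)) t) ∧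
    (∀ t : ℝ, 0 ≤ t →
      HasDerivAt (fun s => (1 / 2) * (G s) ^ 2 + (1 / 2) * (P s) ^ 2)
        (-(G t) ^ 2) t) ∧
    AntitoneOn (fun t => (G t) ^ 2 + (P t) ^ 2) (Set.Ici (0 : ℝ)) ∧
    (∫ t in Set.Ioi (0 : ℝ), (G t) ^ 2) ≤ (1 / 2) * ((G 0) ^ 2 + (P 0) ^ 2) :=
  centralized_double_integrator_lyapunov_general Qx Qxx Qxt hQx hHess k hk x v kd hkd hxv hv G P hG
    hP
end

section
/- Let N ≥ 1 and for i = 1,…,N let L_i : ℝ × [0,∞) → ℝ be three times continuously differentiable with ∂²L_i/∂x²(x,t) ≠ 0 for all (x,t), and define k_i(x,t) = (∂²L_i/∂x²(x,t))^{-1}·(∂L_i/∂x(x,t) + ∂²L_i/∂t∂x(x,t)). Let r_i : [0,∞) → ℝ be continuous with Σ_{i=1}^{N} r_i(t) = 0 for all t, and let x_i, v_i : [0,∞) → ℝ be continuously differentiable with ẋ_i(t) = v_i(t) and v̇_i(t) = −(d/dt)[k_i(x_i(t),t)] − ∂²L_i/∂x²(x_i(t),t)·∂L_i/∂x(x_i(t),t)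 + r_i(t) for all t. Assume there is a function c : [0,∞) → ℝ with ∂²L_i/∂x²(x_i(t),t) = c(t) for all i and all t (equal Hessians along the trajectories). Then S(t) := Σ_{i=1}^{N} ∂L_i/∂x(x_i(t),t) and P(t) := Σ_{i=1}^{N} (v_i(t) + k_i(x_i(t),t)) satisfy S′(t) = c(t)·P(t) − S(t) and P′(t) = −c(t)·S(t) for all t ≥ 0, so that (d/dt)[½·S(t)² + ½·P(t)²] = −S(t)²; consequently S(t)² + P(t)² ≤ S(0)² + P(0)² for all t and ∫₀^∞ S(t)² dt ≤ ½·(S(0)² + P(0)²). -/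
/-!
Summing the agents' equations, the equal Hessians and `∑ rᵢ = 0` make the aggregate gradient `S`
and aggregate momentum `P` a closed planar system `S' = c P - S`, `P' = -c S`: a time-varying
rotation with damping on `S` only. Hence `V = (S² + P²) / 2` has `V' = -S²`, so `V` is
nonincreasing, and since `V ≥ 0` the fundamental theorem of calculus gives `∫₀^T S² ≤ V 0` for
every `T`, which passes to the improper integral.
-/

open MeasureTheory Set Filter Finset

theorem HasFDerivAt.hasDerivAt_comp_graph_s7 {F : ℝ × ℝ → ℝ} {γ : ℝ → ℝ} {a b v t : ℝ}
    (hF : HasFDerivAt F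
      (a • ContinuousLinearMap.fst ℝ ℝ ℝ + b • ContinuousLinearMap.snd ℝ ℝ ℝ) (γ t, t))
    (hγ : HasDerivAt γ v t) :
    HasDerivAt (fun s => F (γ s, s)) (a * v + b) t := by
  have h := hF.comp_hasDerivAt (f := fun s => (γ s, s)) t (hγ.prodMk (hasDerivAt_id t))
  simp only [add_apply, smul_apply, ContinuousLinearMap.coe_fst', ContinuousLinearMap.coe_snd',
    smul_eq_mul, mul_one] at h
  exact h

theorem setIntegral_Ioi_le_of_forall_intervalIntegral_le {f : ℝ → ℝ} {a C : ℝ} (hC : 0 ≤ C)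
    (h : ∀ T, a ≤ T → ∫ t in a..T, f t ≤ C) : ∫ t in Ioi a, f t ≤ C := by
  by_cases hf : IntegrableOn f (Ioi a)
  · refine le_of_tendsto (intervalIntegral_tendsto_integral_Ioi a hf tendsto_id) ?_
    filter_upwards [eventually_ge_atTop a] with T hT using h T hT
  · rwa [integral_undef hf]

section Dissipation

variable {V f : ℝ → ℝ} {a : ℝ}

theorem antitoneOn_Ici_of_hasDerivAt_neg (hV : ∀ t, a ≤ t → HasDerivAt V (-f t) t)
    (hf : ∀ t, a ≤ t → 0 ≤ f t) : AntitoneOn V (Ici a) := by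
  refine antitoneOn_of_hasDerivWithinAt_nonpos (f' := fun t => -f t) (convex_Ici a)
    (fun t ht => (hV t ht).continuousAt.continuousWithinAt) (fun t ht => ?_) (fun t ht => ?_)
  all_goals rw [interior_Ici] at ht
  · exact (hV t (le_of_lt ht)).hasDerivWithinAt
  · exact neg_nonpos.mpr (hf t (le_of_lt ht))

theorem setIntegral_Ioi_le_of_hasDerivAt_neg (hV : ∀ t, a ≤ t → HasDerivAt V (-f t) t)
    (hf : ContinuousOn f (Ici a)) (hV₀ : ∀ t, a ≤ t → 0 ≤ V t) :
    ∫ t in Ioi a, f t ≤ V a := by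
  refine setIntegral_Ioi_le_of_forall_intervalIntegral_le (hV₀ a le_rfl) fun T hT => ?_
  have hftc : ∫ t in a..T, f t = -V T - -V a := by
    refine intervalIntegral.integral_eq_sub_of_hasDerivAt
      (fun t ht => by simpa using (hV t (uIcc_of_le hT ▸ ht).1).neg) ?_
    exact (hf.mono Icc_subset_Ici_self).intervalIntegrable_of_Icc hT
  linarith [hV₀ T hT]

end Dissipation

noncomputable def halfEnergy (S P : ℝ → ℝ) (t : ℝ) : ℝ := 1 / 2 * S t ^ 2 + 1 / 2 * P t ^ 2

section DampedRotation

variable {S P c : ℝ → ℝ}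
  (hS : ∀ t, 0 ≤ t → HasDerivAt S (c t * P t - S t) t)
  (hP : ∀ t, 0 ≤ t → HasDerivAt P (-(c t * S t)) t)
include hS hP

theorem hasDerivAt_halfEnergy {t : ℝ} (ht : 0 ≤ t) :
    HasDerivAt (halfEnergy S P) (-S t ^ 2) t := by
  refine ((((hS t ht).fun_pow 2).const_mul (1 / 2 : ℝ)).fun_add
    (((hP t ht).fun_pow 2).const_mul (1 / 2 : ℝ))).congr_deriv ?_
  ring

theorem sq_add_sq_le_of_dampedRotation {t : ℝ} (ht : 0 ≤ t) :
    S t ^ 2 + P t ^ 2 ≤ S 0 ^ 2 + P 0 ^ 2 := by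
  have hanti := antitoneOn_Ici_of_hasDerivAt_neg (f := fun t => S t ^ 2)
    (fun t ht => hasDerivAt_halfEnergy hS hP ht) fun t _ => sq_nonneg (S t)
  have := hanti self_mem_Ici ht ht
  unfold halfEnergy at this
  linarith

theorem setIntegral_Ioi_sq_le_of_dampedRotation :
    ∫ t in Ioi 0, S t ^ 2 ≤ 1 / 2 * (S 0 ^ 2 + P 0 ^ 2) := by
  have hcont : ContinuousOn (fun t => S t ^ 2) (Ici 0) := fun t ht =>
    ((hS t ht).continuousAt.pow 2).continuousWithinAt
  have := setIntegral_Ioi_le_of_hasDerivAt_neg (fun t ht => hasDerivAt_halfEnergy hS hP ht)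
    hcont fun t _ => by unfold halfEnergy; positivity
  unfold halfEnergy at this
  linarith

end DampedRotation

/-- `Lx i`, `Lxx i`, `Lxt i` stand for `∂Lᵢ/∂x`, `∂²Lᵢ/∂x²`, `∂²Lᵢ/∂t∂x`, and `kd i t` for the
total time derivative of `s ↦ kᵢ(xᵢ s, s)` at `t`. -/
theorem double_integrator_aggregate_lyapunov_general
    (N : ℕ)
    (Lx Lxx Lxt : Fin N → ℝ → ℝ → ℝ)
    (hLx : ∀ i : Fin N, ∀ x t : ℝ,
      HasFDerivAt (fun p : ℝ × ℝ => Lx i p.1 p.2)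
        (Lxx i x t • ContinuousLinearMap.fst ℝ ℝ ℝ +
          Lxt i x t • ContinuousLinearMap.snd ℝ ℝ ℝ) (x, t))
    (hHess : ∀ i : Fin N, ∀ x t : ℝ, Lxx i x t ≠ 0)
    (k : Fin N → ℝ → ℝ → ℝ)
    (hk : ∀ i : Fin N, k i = fun x t => (Lxx i x t)⁻¹ * (Lx i x t + Lxt i x t))
    (r : Fin N → ℝ → ℝ)
    (hrsum : ∀ t : ℝ, 0 ≤ t → ∑ i, r i t = 0)
    (x v : Fin N → ℝ → ℝ)
    (kd : Fin N → ℝ → ℝ)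
    (hkd : ∀ i : Fin N, ∀ t : ℝ, 0 ≤ t →
      HasDerivAt (fun s => k i (x i s) s) (kd i t) t)
    (hxv : ∀ i : Fin N, ∀ t : ℝ, 0 ≤ t → HasDerivAt (x i) (v i t) t)
    (hv : ∀ i : Fin N, ∀ t : ℝ, 0 ≤ t →
      HasDerivAt (v i)
        (-kd i t - Lxx i (x i t) t * Lx i (x i t) t + r i t) t)
    (c : ℝ → ℝ)
    (hHessEq : ∀ i : Fin N, ∀ t : ℝ, 0 ≤ t → Lxx i (x i t) t = c t)
    (S P : ℝ → ℝ)
    (hS : S = fun t => ∑ i, Lx i (x i t) t)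
    (hP : P = fun t => ∑ i, (v i t + k i (x i t) t)) :
    (∀ t : ℝ, 0 ≤ t → HasDerivAt S (c t * P t - S t) t) ∧
    (∀ t : ℝ, 0 ≤ t → HasDerivAt P (-(c t * S t)) t) ∧
    (∀ t : ℝ, 0 ≤ t →
      HasDerivAt (fun s => (1 / 2) * (S s) ^ 2 + (1 / 2) * (P s) ^ 2)
        (-(S t) ^ 2) t) ∧
    (∀ t : ℝ, 0 ≤ t → (S t) ^ 2 + (P t) ^ 2 ≤ (S 0) ^ 2 + (P 0) ^ 2) ∧
    (∫ t in Set.Ioi (0 : ℝ), (S t) ^ 2) ≤ (1 / 2) * ((S 0) ^ 2 + (P 0) ^ 2) := by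
  have hS' : ∀ t, 0 ≤ t → HasDerivAt S (c t * P t - S t) t := by
    intro t ht
    have hagent : ∀ i, HasDerivAt (fun s => Lx i (x i s) s)
        (c t * (v i t + k i (x i t) t) - Lx i (x i t) t) t := by
      intro i
      refine ((hLx i (x i t) t).hasDerivAt_comp_graph_s7 (hxv i t ht)).congr_deriv ?_
      rw [hk, ← hHessEq i t ht]
      field_simp [hHess i (x i t) t]
      ring
    subst hS hP
    refine (HasDerivAt.fun_sum (u := univ) fun i _ => hagent i).congr_deriv ?_
    simp only [mul_sum, sum_sub_distrib]
  have hP' : ∀ t, 0 ≤ t → HasDerivAt P (-(c t * S t)) t := by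
    intro t ht
    have hagent : ∀ i, HasDerivAt (fun s => v i s + k i (x i s) s)
        (-(c t * Lx i (x i t) t) + r i t) t := by
      intro i
      refine ((hv i t ht).fun_add (hkd i t ht)).congr_deriv ?_
      rw [← hHessEq i t ht]
      ring
    subst hS hP
    refine (HasDerivAt.fun_sum (u := univ) fun i _ => hagent i).congr_deriv ?_
    rw [sum_add_distrib, hrsum t ht, add_zero, mul_sum, ← sum_neg_distrib]
  exact ⟨hS', hP', fun t ht => hasDerivAt_halfEnergy hS' hP' ht,
    fun t ht => sq_add_sq_le_of_dampedRotation hS' hP' ht,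
    setIntegral_Ioi_sq_le_of_dampedRotation hS' hP'⟩

/-- Lyapunov analysis for double-integrator networks under the interior-point
based control law (core of Theorem 2). Here `Lx i`, `Lxx i`, `Lxt i` denote
∂L_i/∂x, ∂²L_i/∂x² and ∂²L_i/∂t∂x, `k i` is the feedforward term of agent i,
and `kd i t` is the total time derivative of t ↦ k_i(x_i(t),t) (which exists
since L_i is C³). The Hessians along the trajectories agree and equal c(t). -/
theorem double_integrator_aggregate_lyapunov
    (N : ℕ) (hN : 1 ≤ N)
    (L Lx Lxx Lxt : Fin N → ℝ → ℝ → ℝ)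
    (hL : ∀ i : Fin N, ∀ x t : ℝ, HasDerivAt (fun y => L i y t) (Lx i x t) x)
    (hLx : ∀ i : Fin N, ∀ x t : ℝ,
      HasFDerivAt (fun p : ℝ × ℝ => Lx i p.1 p.2)
        (Lxx i x t • ContinuousLinearMap.fst ℝ ℝ ℝ +
          Lxt i x t • ContinuousLinearMap.snd ℝ ℝ ℝ) (x, t))
    (hHess : ∀ i : Fin N, ∀ x t : ℝ, Lxx i x t ≠ 0)
    (k : Fin N → ℝ → ℝ → ℝ)
    (hk : ∀ i : Fin N, k i = fun x t => (Lxx i x t)⁻¹ * (Lx i x t + Lxt i x t))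
    (r : Fin N → ℝ → ℝ)
    (hrcont : ∀ i : Fin N, Continuous (r i))
    (hrsum : ∀ t : ℝ, 0 ≤ t → ∑ i, r i t = 0)
    (x v : Fin N → ℝ → ℝ)
    (kd : Fin N → ℝ → ℝ)
    (hkd : ∀ i : Fin N, ∀ t : ℝ, 0 ≤ t →
      HasDerivAt (fun s => k i (x i s) s) (kd i t) t)
    (hxv : ∀ i : Fin N, ∀ t : ℝ, 0 ≤ t → HasDerivAt (x i) (v i t) t)
    (hv : ∀ i : Fin N, ∀ t : ℝ, 0 ≤ t →
      HasDerivAt (v i)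
        (-kd i t - Lxx i (x i t) t * Lx i (x i t) t + r i t) t)
    (c : ℝ → ℝ)
    (hHessEq : ∀ i : Fin N, ∀ t : ℝ, 0 ≤ t → Lxx i (x i t) t = c t)
    (S P : ℝ → ℝ)
    (hS : S = fun t => ∑ i, Lx i (x i t) t)
    (hP : P = fun t => ∑ i, (v i t + k i (x i t) t)) :
    (∀ t : ℝ, 0 ≤ t → HasDerivAt S (c t * P t - S t) t) ∧
    (∀ t : ℝ, 0 ≤ t → HasDerivAt P (-(c t * S t)) t) ∧
    (∀ t : ℝ, 0 ≤ t →
      HasDerivAt (fun s => (1 / 2) * (S s) ^ 2 + (1 / 2) * (P s) ^ 2)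
        (-(S t) ^ 2) t) ∧
    (∀ t : ℝ, 0 ≤ t → (S t) ^ 2 + (P t) ^ 2 ≤ (S 0) ^ 2 + (P 0) ^ 2) ∧
    (∫ t in Set.Ioi (0 : ℝ), (S t) ^ 2) ≤ (1 / 2) * ((S 0) ^ 2 + (P 0) ^ 2) :=
  double_integrator_aggregate_lyapunov_general N Lx Lxx Lxt hLx hHess k hk r hrsum x v kd hkd hxv hv
    c hHessEq S P hS hP
end

section
/- For every natural number N ≥ 1, every real p > 0, and every vector v ∈ ℝ^N, it holds that vᵀ Π sig(v)^p ≥ 0, where Π = I_N − (1/N)·𝟏𝟏ᵀ and sig(v)^p denotes the vector with i-th component |v_i|^p·sgn(v_i). Equivalently, (Σ_{i=1}^{N} v_i)·(Σ_{i=1}^{N} |v_i|^p·sgn(v_i)) ≤ N·Σ_{i=1}^{N} |v_i|^{p+1}. -/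
/-!
For `p > 0` the map `x ↦ |x|^p · sgn x` is odd and increasing, so `v` and `sig(v)^p` are similarly
ordered and Chebyshev's sum inequality gives `(∑ vᵢ)(∑ sig(vᵢ)^p) ≤ N ∑ vᵢ sig(vᵢ)^p`; the right-hand
sum is `∑ |vᵢ|^(p+1)`, and the left-hand side divided by `N` is exactly what `Π` subtracts.
-/

open Finset

namespace Real

noncomputable def sig (p x : ℝ) : ℝ := |x| ^ p * sign x

theorem sig_neg (p x : ℝ) : sig p (-x) = -sig p x := by
  simp [sig, sign_neg]

theorem mul_sign_self (x : ℝ) : x * sign x = |x| := by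
  rcases lt_trichotomy x 0 with hx | rfl | hx
  · rw [sign_of_neg hx, abs_of_neg hx, mul_neg_one]
  · simp
  · rw [sign_of_pos hx, abs_of_pos hx, mul_one]

theorem mul_sig {p : ℝ} (hp : p + 1 ≠ 0) (x : ℝ) : x * sig p x = |x| ^ (p + 1) := by
  rw [sig, mul_left_comm, mul_sign_self, rpow_add_one' (abs_nonneg x) hp]

theorem monotone_sig {p : ℝ} (hp : 0 < p) : Monotone (sig p) := by
  refine monotone_of_odd_of_monotoneOn_nonneg (sig_neg p) ?_
  refine (monotoneOn_rpow_Ici_of_exponent_nonneg hp.le).congr fun x (hx : 0 ≤ x) => ?_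
  rcases hx.eq_or_lt with rfl | hx
  · simp [sig, zero_rpow hp.ne']
  · rw [sig, sign_of_pos hx, abs_of_pos hx, mul_one]

end Real

theorem Monovary.sum_mul_sub_mean_nonneg {ι : Type*} [Fintype ι] {f g : ι → ℝ}
    (hfg : Monovary f g) :
    0 ≤ ∑ i, f i * (g i - (1 / (Fintype.card ι : ℝ)) * ∑ j, g j) := by
  obtain hι | hι := isEmpty_or_nonempty ι
  · simp
  have hcard : (0 : ℝ) < Fintype.card ι := by exact_mod_cast Fintype.card_pos
  calc (0 : ℝ) ≤ ∑ i, f i * g i - (1 / (Fintype.card ι : ℝ)) * ((∑ i, f i) * ∑ i, g i) := by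
        rw [sub_nonneg, one_div, inv_mul_le_iff₀ hcard]
        exact hfg.sum_mul_sum_le_card_mul_sum
    _ = ∑ i, f i * (g i - (1 / (Fintype.card ι : ℝ)) * ∑ j, g j) := by
        simp only [mul_sub, sum_sub_distrib, ← sum_mul]; ring

theorem dotProduct_pi_sig_nonneg_general
    (N : ℕ) (p : ℝ) (hp : 0 < p) (v : Fin N → ℝ) :
    (0 ≤ ∑ i, v i * ((|v i| ^ p * Real.sign (v i)) -
        (1 / (N : ℝ)) * ∑ j, |v j| ^ p * Real.sign (v j))) ∧
    (∑ i, v i) * (∑ i, |v i| ^ p * Real.sign (v i)) ≤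
      (N : ℝ) * ∑ i, |v i| ^ (p + 1) := by
  have hmono : Monovary v (fun i => Real.sig p (v i)) :=
    fun _ _ h => ((Real.monotone_sig hp).reflect_lt h).le
  refine ⟨by simpa [Real.sig] using hmono.sum_mul_sub_mean_nonneg, ?_⟩
  calc (∑ i, v i) * ∑ i, Real.sig p (v i)
      ≤ N * ∑ i, v i * Real.sig p (v i) := by simpa using hmono.sum_mul_sum_le_card_mul_sum
    _ = N * ∑ i, |v i| ^ (p + 1) := by simp only [Real.mul_sig (by linarith : p + 1 ≠ 0)]

/-- Nonnegativity of vᵀ Π sig(v)^p, where Π = I − (1/N)𝟏𝟏ᵀ and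
sig(y)^p = |y|^p · sgn(y) componentwise, together with the equivalent
Chebyshev-type sum inequality. -/
theorem dotProduct_pi_sig_nonneg
    (N : ℕ) (hN : 1 ≤ N) (p : ℝ) (hp : 0 < p) (v : Fin N → ℝ) :
    (0 ≤ ∑ i, v i * ((|v i| ^ p * Real.sign (v i)) -
        (1 / (N : ℝ)) * ∑ j, |v j| ^ p * Real.sign (v j))) ∧
    (∑ i, v i) * (∑ i, |v i| ^ p * Real.sign (v i)) ≤
      (N : ℝ) * ∑ i, |v i| ^ (p + 1) :=
  dotProduct_pi_sig_nonneg_general N p hp v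
end
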